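/- Let (A, B, E, E') be a C*-operator-valued infinitesimal probability space, let x = x* ∈ A, and set X = [[x, 0], [0, x]] ∈ Ã. Then there exists δ > 0 such that for all b, c ∈ B with ‖b‖ + ‖c‖ < δ, the elements I + ϱ_X([[b, c], [0, b]]) and 1 + ϱ_x(b) are invertible and ρ_X([[b, c], [0, b]]) := ϱ_X([[b, c], [0, b]]) (I + ϱ_X([[b, c], [0, b]]))⁻¹ = [[ρ_x(b), (Dρ_x)(b)(c) + ∂ρ_x(b)], [0, ρ_x(b)]], where Dρ_x is the Fréchet derivative of ρ_x and ∂ρ_x(b) = (1 + ϱ_x(b))⁻¹ ∂ϱ_x(b) (1 + ϱ_x(b))⁻¹. -/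

import Mathlib

open scoped BigOperators

variable {A B : Type*} [CStarAlgebra A] [CStarAlgebra B]

/-- `(A, B, E, E')` is a C*-operator-valued infinitesimal probability space, where the unital
C*-subalgebra `B ⊆ A` is realized via the isometric unital star-algebra embedding `ι : B → A`:
`E` is a bounded, completely positive, `B`-`B`-bimodule linear map with `E 1 = 1`, and `E'` is a
bounded, selfadjoint, `B`-`B`-bimodule linear map with `E' 1 = 0`. -/
structure IsCStarOVIProbSpace (ι : B →⋆ₐ[ℂ] A) (E E' : A →L[ℂ] B) : Prop where
  isometry : Isometry ι
  E_one : E 1 = 1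
  E_bimod : ∀ (b₁ b₂ : B) (a : A), E (ι b₁ * a * ι b₂) = b₁ * E a * b₂
  E_cp : ∀ (n : ℕ) (M : Matrix (Fin n) (Fin n) A),
      (∃ N : Matrix (Fin n) (Fin n) A, M = star N * N) →
      ∃ N' : Matrix (Fin n) (Fin n) B, M.map ⇑E = star N' * N'
  E'_one : E' 1 = 0
  E'_selfadj : ∀ a : A, E' (star a) = star (E' a)
  E'_bimod : ∀ (b₁ b₂ : B) (a : A), E' (ι b₁ * a * ι b₂) = b₁ * E' a * b₂

/-- `ϱ_z(b) = E(zb(1 − zb)⁻¹)`. -/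
noncomputable def varrhoT (ι : B →⋆ₐ[ℂ] A) (E : A →L[ℂ] B) (z : A) (b : B) : B :=
  E (z * ι b * Ring.inverse (1 - z * ι b))

/-- The ρ-transform `ρ_z(b) = ϱ_z(b)(1 + ϱ_z(b))⁻¹`. -/
noncomputable def rhoT (ι : B →⋆ₐ[ℂ] A) (E : A →L[ℂ] B) (z : A) (b : B) : B :=
  varrhoT ι E z b * Ring.inverse (1 + varrhoT ι E z b)

/-- `∂ϱ_z(b) = E'(zb(1 − zb)⁻¹)`. -/
noncomputable def dvarrhoT (ι : B →⋆ₐ[ℂ] A) (E' : A →L[ℂ] B) (z : A) (b : B) : B :=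
  E' (z * ι b * Ring.inverse (1 - z * ι b))

/-- The infinitesimal ρ-transform `∂ρ_z(b) = (1 + ϱ_z(b))⁻¹ ∂ϱ_z(b) (1 + ϱ_z(b))⁻¹`. -/
noncomputable def drhoT (ι : B →⋆ₐ[ℂ] A) (E E' : A →L[ℂ] B) (z : A) (b : B) : B :=
  Ring.inverse (1 + varrhoT ι E z b) * dvarrhoT ι E' z b * Ring.inverse (1 + varrhoT ι E z b)

open TrivSqZeroExt

/-- The map `Ẽ : Ã → B̃`, `[[a, a'], [0, a]] ↦ [[E a, E' a + E a'], [0, E a]]`, where the upper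
triangular algebra `Ã` (of matrices `[[a, a'], [0, a]]`) is realized as the trivial square-zero
extension `TrivSqZeroExt A A`. -/
noncomputable def tildeE (E E' : A →L[ℂ] B) (p : TrivSqZeroExt A A) : TrivSqZeroExt B B :=
  inl (E p.fst) + inr (E' p.fst + E p.snd)

/-- The embedding of `B̃` into `Ã` induced by `ι`. -/
noncomputable def tildeIota (ι : B →⋆ₐ[ℂ] A) (p : TrivSqZeroExt B B) : TrivSqZeroExt A A :=
  inl (ι p.fst) + inr (ι p.snd)

/-!
The upper triangular algebra `Ã` is the square-zero extension `A ⊕ A ε` with `ε² = 0`, so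
evaluating an algebraic expression at `a + a' ε` yields its value at `a` plus `ε` times its
derivative at `a` in direction `a'`. Concretely, `1 - u - v ε` is invertible with inverse
`R + R v R ε` (`R = (1 - u)⁻¹`), and `R v R`, `S q S` are exactly the Fréchet derivatives of
`u ↦ u (1 - u)⁻¹` and `p ↦ p (1 + p)⁻¹`. Applying `Ẽ` contributes the extra term `∂ϱ_x(b)` in the
corner, and the chain rule identifies the corner of `ρ_X` with `Dρ_x(b)(c) + ∂ρ_x(b)`. A uniform
`δ` exists because both invertibility conditions hold at `b = 0` and are open.
-/

open Topology

theorem Ring.inverse_eq_of_mul_eq_one {M₀ : Type*} [MonoidWithZero M₀] {a b : M₀} (ha : IsUnit a)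
    (h : a * b = 1) : Ring.inverse a = b := by
  rw [← Ring.inverse_mul_cancel_left a b ha, h, mul_one]

section Ring

variable {R : Type*} [Ring R]

theorem mul_inverse_one_sub {u : R} (h : IsUnit (1 - u)) :
    u * Ring.inverse (1 - u) = Ring.inverse (1 - u) - 1 :=
  calc u * Ring.inverse (1 - u) = Ring.inverse (1 - u) - (1 - u) * Ring.inverse (1 - u) := by
        noncomm_ring
    _ = Ring.inverse (1 - u) - 1 := by rw [Ring.mul_inverse_cancel _ h]

theorem mul_inverse_one_add {p : R} (h : IsUnit (1 + p)) :
    p * Ring.inverse (1 + p) = 1 - Ring.inverse (1 + p) :=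
  calc p * Ring.inverse (1 + p) = (1 + p) * Ring.inverse (1 + p) - Ring.inverse (1 + p) := by
        noncomm_ring
    _ = 1 - Ring.inverse (1 + p) := by rw [Ring.mul_inverse_cancel _ h]

end Ring

namespace TrivSqZeroExt

open scoped RightActions

variable {R M : Type*} [Ring R] [AddCommGroup M] [Module R M] [Module Rᵐᵒᵖ M]
  [SMulCommClass R Rᵐᵒᵖ M]

theorem inverse_inl_add_inr {a : R} (ha : IsUnit a) (m : M) :
    Ring.inverse (inl a + inr m : TrivSqZeroExt R M) =
      inl (Ring.inverse a) - inr (Ring.inverse a •> m <• Ring.inverse a) := by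
  apply Ring.inverse_eq_of_mul_eq_one (isUnit_iff_isUnit_fst.mpr (by simpa using ha))
  ext
  · simp [Ring.mul_inverse_cancel _ ha]
  · simp [smul_comm a (MulOpposite.op _), smul_smul, Ring.mul_inverse_cancel _ ha]

theorem mul_inverse_one_sub_inl_add_inr {u : R} (hu : IsUnit (1 - u)) (v : M) :
    (inl u + inr v) * Ring.inverse (1 - (inl u + inr v)) =
      inl (u * Ring.inverse (1 - u)) +
        inr (Ring.inverse (1 - u) •> v <• Ring.inverse (1 - u)) := by
  have hU : IsUnit (1 - (inl u + inr v) : TrivSqZeroExt R M) :=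
    isUnit_iff_isUnit_fst.mpr (by simpa using hu)
  have h1 : (1 - (inl u + inr v) : TrivSqZeroExt R M) = inl (1 - u) + inr (-v) := by
    ext <;> simp
  rw [mul_inverse_one_sub hU, h1, inverse_inl_add_inr hu, mul_inverse_one_sub hu]
  ext <;> simp

theorem mul_inverse_one_add_inl_add_inr {p : R} (hp : IsUnit (1 + p)) (q : M) :
    (inl p + inr q) * Ring.inverse (1 + (inl p + inr q)) =
      inl (p * Ring.inverse (1 + p)) +
        inr (Ring.inverse (1 + p) •> q <• Ring.inverse (1 + p)) := by
  have hP : IsUnit (1 + (inl p + inr q) : TrivSqZeroExt R M) :=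
    isUnit_iff_isUnit_fst.mpr (by simpa using hp)
  have h1 : (1 + (inl p + inr q) : TrivSqZeroExt R M) = inl (1 + p) + inr q := by
    ext <;> simp
  rw [mul_inverse_one_add hP, h1, inverse_inl_add_inr hp, mul_inverse_one_add hp]
  ext <;> simp

end TrivSqZeroExt

section Derivative

open ContinuousLinearMap

variable {𝕜 R : Type*} [NontriviallyNormedField 𝕜] [NormedRing R] [HasSummableGeomSeries R]
  [NormedAlgebra 𝕜 R]

theorem hasFDerivAt_ringInverse_of_isUnit {a : R} (ha : IsUnit a) :
    HasFDerivAt Ring.inverse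
      (-mulLeftRight 𝕜 R (Ring.inverse a) (Ring.inverse a)) a := by
  simpa [ha.unit_spec, Ring.inverse_of_isUnit ha] using
    hasFDerivAt_ringInverse (𝕜 := 𝕜) ha.unit

theorem hasFDerivAt_mul_inverse_one_sub {u : R} (hu : IsUnit (1 - u)) :
    HasFDerivAt (fun v => v * Ring.inverse (1 - v))
      (mulLeftRight 𝕜 R (Ring.inverse (1 - u)) (Ring.inverse (1 - u))) u := by
  have hunits : ∀ᶠ v in 𝓝 u, IsUnit (1 - v) :=
    (continuous_const.sub continuous_id).continuousAt.eventually_mem (Units.isOpen.mem_nhds hu)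
  have h := ((hasFDerivAt_ringInverse_of_isUnit (𝕜 := 𝕜) hu).comp u
    ((hasFDerivAt_id u).const_sub 1)).sub_const 1
  refine (h.congr_of_eventuallyEq ?_).congr_fderiv ?_
  · filter_upwards [hunits] with v hv using mul_inverse_one_sub hv
  · ext; simp

theorem hasFDerivAt_mul_inverse_one_add {p : R} (hp : IsUnit (1 + p)) :
    HasFDerivAt (fun q => q * Ring.inverse (1 + q))
      (mulLeftRight 𝕜 R (Ring.inverse (1 + p)) (Ring.inverse (1 + p))) p := by
  have hunits : ∀ᶠ q in 𝓝 p, IsUnit (1 + q) :=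
    (continuous_const.add continuous_id).continuousAt.eventually_mem (Units.isOpen.mem_nhds hp)
  have h := ((hasFDerivAt_ringInverse_of_isUnit (𝕜 := 𝕜) hp).comp p
    ((hasFDerivAt_id p).const_add 1)).const_sub 1
  refine (h.congr_of_eventuallyEq ?_).congr_fderiv ?_
  · filter_upwards [hunits] with q hq using mul_inverse_one_add hq
  · ext; simp

end Derivative

section Transforms

open scoped CStarAlgebra
open ContinuousLinearMap TrivSqZeroExt

-- Continuity is automatic: star homomorphisms between C⋆-algebras are contractive.
noncomputable def StarAlgHom.toContinuousLinearMap (ι : B →⋆ₐ[ℂ] A) : B →L[ℂ] A :=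
  ⟨ι, map_continuous ι⟩

@[simp]
theorem StarAlgHom.toContinuousLinearMap_apply (ι : B →⋆ₐ[ℂ] A) (b : B) :
    ι.toContinuousLinearMap b = ι b :=
  rfl

variable (ι : B →⋆ₐ[ℂ] A) (E E' : A →L[ℂ] B) (x : A)

theorem hasFDerivAt_varrhoT {b : B} (hu : IsUnit (1 - x * ι b)) :
    HasFDerivAt (varrhoT ι E x)
      (E ∘L mulLeftRight ℂ A (Ring.inverse (1 - x * ι b)) (Ring.inverse (1 - x * ι b)) ∘L
        mul ℂ A x ∘L ι.toContinuousLinearMap) b := by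
  have hlin : HasFDerivAt (fun b => x * ι b) (mul ℂ A x ∘L ι.toContinuousLinearMap) b :=
    (mul ℂ A x ∘L ι.toContinuousLinearMap).hasFDerivAt
  have hres := (hasFDerivAt_mul_inverse_one_sub (𝕜 := ℂ) hu).comp b hlin
  exact E.hasFDerivAt.comp b hres

theorem hasFDerivAt_rhoT {b : B} (hu : IsUnit (1 - x * ι b)) (hp : IsUnit (1 + varrhoT ι E x b)) :
    HasFDerivAt (rhoT ι E x)
      (mulLeftRight ℂ B (Ring.inverse (1 + varrhoT ι E x b))
          (Ring.inverse (1 + varrhoT ι E x b)) ∘L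
        E ∘L mulLeftRight ℂ A (Ring.inverse (1 - x * ι b)) (Ring.inverse (1 - x * ι b)) ∘L
        mul ℂ A x ∘L ι.toContinuousLinearMap) b :=
  (hasFDerivAt_mul_inverse_one_add hp).comp b (hasFDerivAt_varrhoT ι E x hu)

theorem eventually_isUnit_one_sub_and_one_add_varrhoT :
    ∀ᶠ b in 𝓝 0, IsUnit (1 - x * ι b) ∧ IsUnit (1 + varrhoT ι E x b) := by
  have h0 : IsUnit (1 - x * ι 0) := by simp
  have hu : ∀ᶠ b in 𝓝 0, IsUnit (1 - x * ι b) :=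
    (continuous_const.sub (continuous_const.mul (map_continuous ι))).continuousAt.eventually_mem
      (Units.isOpen.mem_nhds h0)
  have hp : ∀ᶠ b in 𝓝 0, IsUnit (1 + varrhoT ι E x b) := by
    refine (continuousAt_const.add (hasFDerivAt_varrhoT ι E x h0).continuousAt).eventually_mem
      (Units.isOpen.mem_nhds ?_)
    simp [varrhoT]
  exact hu.and hp

theorem inl_mul_tildeIota (b c : B) :
    inl x * tildeIota ι (inl b + inr c) = inl (x * ι b) + inr (x * ι c) := by
  ext <;> simp [tildeIota]

theorem varrho_upper_triangular {b : B} (hu : IsUnit (1 - x * ι b)) (c : B) :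
    tildeE E E' (inl x * tildeIota ι (inl b + inr c) *
        Ring.inverse (1 - inl x * tildeIota ι (inl b + inr c))) =
      inl (varrhoT ι E x b) + inr (dvarrhoT ι E' x b +
        E (Ring.inverse (1 - x * ι b) * (x * ι c) * Ring.inverse (1 - x * ι b))) := by
  rw [inl_mul_tildeIota, mul_inverse_one_sub_inl_add_inr hu]
  ext <;> simp [tildeE, varrhoT, dvarrhoT]

end Transforms

theorem rho_upper_triangular_general
    (ι : B →⋆ₐ[ℂ] A) (E E' : A →L[ℂ] B)
    (x : A) :
    ∃ δ > (0 : ℝ), ∀ b c : B, ‖b‖ + ‖c‖ < δ →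
      IsUnit (1 - inl x * tildeIota ι (inl b + inr c)) ∧
      IsUnit (1 + tildeE E E' (inl x * tildeIota ι (inl b + inr c) *
          Ring.inverse (1 - inl x * tildeIota ι (inl b + inr c)))) ∧
      IsUnit (1 + varrhoT ι E x b) ∧
      DifferentiableAt ℂ (rhoT ι E x) b ∧
      tildeE E E' (inl x * tildeIota ι (inl b + inr c) *
            Ring.inverse (1 - inl x * tildeIota ι (inl b + inr c))) *
          Ring.inverse (1 + tildeE E E' (inl x * tildeIota ι (inl b + inr c) *
            Ring.inverse (1 - inl x * tildeIota ι (inl b + inr c)))) =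
        inl (rhoT ι E x b) + inr (fderiv ℂ (rhoT ι E x) b c + drhoT ι E E' x b) := by
  obtain ⟨δ, hδ, hball⟩ :=
    Metric.mem_nhds_iff.mp (eventually_isUnit_one_sub_and_one_add_varrhoT ι E x)
  refine ⟨δ, hδ, fun b c hbc => ?_⟩
  obtain ⟨hu, hp⟩ : IsUnit (1 - x * ι b) ∧ IsUnit (1 + varrhoT ι E x b) :=
    hball (mem_ball_zero_iff.mpr (by linarith [norm_nonneg c]))
  have hrho := hasFDerivAt_rhoT ι E x hu hp
  rw [varrho_upper_triangular ι E E' x hu, mul_inverse_one_add_inl_add_inr hp, hrho.fderiv,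
    inl_mul_tildeIota]
  refine ⟨isUnit_iff_isUnit_fst.mpr (by simpa using hu),
    isUnit_iff_isUnit_fst.mpr (by simpa using hp), hp, hrho.differentiableAt, ?_⟩
  ext <;> simp [rhoT, drhoT, mul_add, add_comm]

/-- For a C*-operator-valued infinitesimal probability space `(A, B, E, E')`, a selfadjoint
`x ∈ A` and `X = [[x, 0], [0, x]]`, there is `δ > 0` such that for all `b, c ∈ B` with
`‖b‖ + ‖c‖ < δ` the elements `I + ϱ_X([[b, c], [0, b]])` and `1 + ϱ_x(b)` are invertible and
`ρ_X([[b, c], [0, b]]) = [[ρ_x(b), (Dρ_x)(b)(c) + ∂ρ_x(b)], [0, ρ_x(b)]]`. -/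
theorem rho_upper_triangular
    (ι : B →⋆ₐ[ℂ] A) (E E' : A →L[ℂ] B) (h : IsCStarOVIProbSpace ι E E')
    (x : A) (hx : star x = x) :
    ∃ δ > (0 : ℝ), ∀ b c : B, ‖b‖ + ‖c‖ < δ →
      IsUnit (1 - inl x * tildeIota ι (inl b + inr c)) ∧
      IsUnit (1 + tildeE E E' (inl x * tildeIota ι (inl b + inr c) *
          Ring.inverse (1 - inl x * tildeIota ι (inl b + inr c)))) ∧
      IsUnit (1 + varrhoT ι E x b) ∧
      DifferentiableAt ℂ (rhoT ι E x) b ∧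
      tildeE E E' (inl x * tildeIota ι (inl b + inr c) *
            Ring.inverse (1 - inl x * tildeIota ι (inl b + inr c))) *
          Ring.inverse (1 + tildeE E E' (inl x * tildeIota ι (inl b + inr c) *
            Ring.inverse (1 - inl x * tildeIota ι (inl b + inr c)))) =
        inl (rhoT ι E x b) + inr (fderiv ℂ (rhoT ι E x) b c + drhoT ι E E' x b) :=
  rho_upper_triangular_general ι E E' x
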